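/- Every element β of B₃ (in its band presentation) can be written in the form β = δ^q · T, where q is an integer and T is either the empty word or a positive word in increasing form, i.e. T = a_τ^{s₁} a_{τ+1}^{s₂} ⋯ a_{τ+t−1}^{s_t} for some t ≥ 1, starting subscript τ modulo 3, and exponents s₁, …, s_t ≥ 1, with consecutive syllable subscripts increasing by 1 modulo 3. -/

import Mathlib

/-!
Every relation reads `a (i + 1) * a i = δ`, so `(a i)⁻¹ = δ⁻¹ * a (i + 1)` and conjugation by `δ`
shifts subscripts by one. It therefore suffices that the forms `δ ^ q * T` are closed under left
multiplication by a generator `a j`: move `a j` past `δ ^ q`, and then `a j` either lengthens the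
first syllable `a τ ^ s₁` of `T` (`j = τ`), cancels one of its letters into a `δ` (`j = τ + 1`), or
starts a new syllable in front (`j = τ - 1`).
-/

/-- The band relations `a₂a₁ = a₃a₂ = a₁a₃`, with subscripts taken modulo 3
(the generator `a₃` is indexed by `0 : ZMod 3`). -/
def bandRels : Set (FreeGroup (ZMod 3)) :=
  { FreeGroup.of 2 * FreeGroup.of 1 * (FreeGroup.of 0 * FreeGroup.of 2)⁻¹,
    FreeGroup.of 0 * FreeGroup.of 2 * (FreeGroup.of 1 * FreeGroup.of 0)⁻¹ }

/-- The band-presented group `⟨a₁, a₂, a₃ | a₂a₁ = a₃a₂ = a₁a₃⟩` (a model of `B₃`). -/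
abbrev BandB3 := PresentedGroup bandRels

/-- The band generators `a i`, indexed by `ZMod 3` (so `a 0 = a₃`). -/
def a (i : ZMod 3) : BandB3 := PresentedGroup.of i

/-- The fundamental element `δ = a₂a₁ (= a₃a₂ = a₁a₃)`. -/
def δ : BandB3 := a 2 * a 1

/-- The positive word in increasing form with initial subscript `τ` and exponent
sequence `s = (s₁, …, s_t)`, namely `a_τ^{s₁} a_{τ+1}^{s₂} ⋯ a_{τ+t−1}^{s_t}`,
with consecutive syllable subscripts increasing by 1 modulo 3.  When `s = []`
this is the empty word `1`. -/
def tailProd (τ : ZMod 3) (s : List ℕ) : BandB3 :=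
  ((List.range s.length).map (fun i : ℕ => a (τ + (i : ZMod 3)) ^ s.getD i 0)).prod

lemma zmod_three_cases (k : ZMod 3) : k = 0 ∨ k = 1 ∨ k = 2 := by
  decide +revert

lemma a_two_mul_a_one_eq_a_zero_mul_a_two : a 2 * a 1 = a 0 * a 2 :=
  PresentedGroup.mk_eq_mk_of_mul_inv_mem (Set.mem_insert _ _)

lemma a_zero_mul_a_two_eq_a_one_mul_a_zero : a 0 * a 2 = a 1 * a 0 :=
  PresentedGroup.mk_eq_mk_of_mul_inv_mem (Set.mem_insert_of_mem _ rfl)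

lemma a_add_one_mul_a (i : ZMod 3) : a (i + 1) * a i = δ := by
  rcases zmod_three_cases i with rfl | rfl | rfl
  · exact a_zero_mul_a_two_eq_a_one_mul_a_zero.symm.trans a_two_mul_a_one_eq_a_zero_mul_a_two.symm
  · rfl
  · exact a_two_mul_a_one_eq_a_zero_mul_a_two.symm

lemma a_mul_δ (i : ZMod 3) : a i * δ = δ * a (i + 1) := by
  calc a i * δ = a i * a (i + 2) * a (i + 1) := by
        rw [mul_assoc, ← a_add_one_mul_a (i + 1), add_assoc, one_add_one_eq_two]
    _ = δ * a (i + 1) := by rw [← a_add_one_mul_a (i + 2), show i + 2 + 1 = i by grind]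

lemma a_mul_δ_inv (i : ZMod 3) : a i * δ⁻¹ = δ⁻¹ * a (i - 1) := by
  rw [mul_inv_eq_iff_eq_mul, mul_assoc, a_mul_δ, sub_add_cancel, inv_mul_cancel_left]

lemma a_mul_δ_zpow (i : ZMod 3) (q : ℤ) : a i * δ ^ q = δ ^ q * a (i + q) := by
  induction q using Int.induction_on with
  | zero => simp
  | succ k ih =>
    rw [zpow_add_one, ← mul_assoc, ih, mul_assoc, a_mul_δ, ← mul_assoc, ← zpow_add_one]
    push_cast
    ring_nf
  | pred k ih =>
    rw [zpow_sub_one, ← mul_assoc, ih, mul_assoc, a_mul_δ_inv, ← mul_assoc, ← zpow_sub_one]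
    push_cast
    ring_nf

lemma inv_a (i : ZMod 3) : (a i)⁻¹ = δ⁻¹ * a (i + 1) := by
  rw [← a_add_one_mul_a i, mul_inv_rev, inv_mul_cancel_right]

lemma tailProd_nil (τ : ZMod 3) : tailProd τ [] = 1 := rfl

lemma tailProd_cons (τ : ZMod 3) (x : ℕ) (s : List ℕ) :
    tailProd τ (x :: s) = a τ ^ x * tailProd (τ + 1) s := by
  simp only [tailProd, List.length_cons, List.range_succ_eq_map, List.map_cons, List.map_map,
    List.prod_cons, Nat.cast_zero, add_zero, List.getD_cons_zero]
  refine congrArg (a τ ^ x * ·) (congrArg List.prod (List.map_congr_left fun i _ => ?_))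
  rw [Function.comp_apply, List.getD_cons_succ, Nat.cast_succ, add_comm (i : ZMod 3), add_assoc]

lemma tailProd_zero_cons (τ : ZMod 3) (s : List ℕ) :
    tailProd τ (0 :: s) = tailProd (τ + 1) s := by
  rw [tailProd_cons, pow_zero, one_mul]

lemma a_mul_tailProd_cons (τ : ZMod 3) (x : ℕ) (s : List ℕ) :
    a τ * tailProd τ (x :: s) = tailProd τ ((x + 1) :: s) := by
  rw [tailProd_cons, tailProd_cons, pow_succ', mul_assoc]

lemma a_add_one_mul_tailProd_succ_cons (τ : ZMod 3) (x : ℕ) (s : List ℕ) :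
    a (τ + 1) * tailProd τ ((x + 1) :: s) = δ * tailProd τ (x :: s) := by
  rw [← a_mul_tailProd_cons, ← mul_assoc, a_add_one_mul_a]

lemma a_sub_one_mul_tailProd (τ : ZMod 3) (s : List ℕ) :
    a (τ - 1) * tailProd τ s = tailProd (τ - 1) (1 :: s) := by
  rw [tailProd_cons, pow_one, sub_add_cancel]

def HasPowerTailForm (β : BandB3) : Prop :=
  ∃ (q : ℤ) (τ : ZMod 3) (s : List ℕ), (∀ x ∈ s, 1 ≤ x) ∧ β = δ ^ q * tailProd τ s

lemma hasPowerTailForm_tailProd {τ : ZMod 3} {s : List ℕ} (hs : ∀ x ∈ s, 1 ≤ x) :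
    HasPowerTailForm (tailProd τ s) :=
  ⟨0, τ, s, hs, by rw [zpow_zero, one_mul]⟩

namespace HasPowerTailForm

lemma one : HasPowerTailForm 1 :=
  tailProd_nil 0 ▸ hasPowerTailForm_tailProd (List.forall_mem_nil _)

lemma δ_zpow_mul {β : BandB3} (q : ℤ) (h : HasPowerTailForm β) : HasPowerTailForm (δ ^ q * β) := by
  obtain ⟨r, τ, s, hs, rfl⟩ := h
  exact ⟨q + r, τ, s, hs, by rw [zpow_add, mul_assoc]⟩

lemma δ_mul {β : BandB3} (h : HasPowerTailForm β) : HasPowerTailForm (δ * β) :=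
  zpow_one δ ▸ h.δ_zpow_mul 1

lemma a_mul_tailProd (i τ : ZMod 3) {s : List ℕ} (hs : ∀ x ∈ s, 1 ≤ x) :
    HasPowerTailForm (a i * tailProd τ s) := by
  cases s with
  | nil => exact tailProd_nil τ ▸ tailProd_cons i 1 [] ▸ hasPowerTailForm_tailProd (by simp)
  | cons x s =>
    rw [List.forall_mem_cons] at hs
    obtain ⟨hx, hs⟩ := hs
    obtain ⟨k, rfl⟩ : ∃ k, i = τ + k := ⟨i - τ, by ring⟩
    rcases zmod_three_cases k with rfl | rfl | rfl
    · rw [add_zero, a_mul_tailProd_cons]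
      exact hasPowerTailForm_tailProd (by simpa using hs)
    · obtain ⟨y, rfl⟩ := Nat.exists_eq_add_of_le' hx
      rw [a_add_one_mul_tailProd_succ_cons]
      rcases Nat.eq_zero_or_pos y with rfl | hy
      · exact tailProd_zero_cons τ s ▸ (hasPowerTailForm_tailProd hs).δ_mul
      · exact (hasPowerTailForm_tailProd (List.forall_mem_cons.mpr ⟨hy, hs⟩)).δ_mul
    · rw [show τ + 2 = τ - 1 by grind, a_sub_one_mul_tailProd]
      exact hasPowerTailForm_tailProd (by simpa using ⟨hx, hs⟩)

lemma a_mul {β : BandB3} (i : ZMod 3) (h : HasPowerTailForm β) : HasPowerTailForm (a i * β) := by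
  obtain ⟨q, τ, s, hs, rfl⟩ := h
  rw [← mul_assoc, a_mul_δ_zpow, mul_assoc]
  exact (a_mul_tailProd _ τ hs).δ_zpow_mul q

lemma inv_a_mul {β : BandB3} (i : ZMod 3) (h : HasPowerTailForm β) :
    HasPowerTailForm ((a i)⁻¹ * β) := by
  rw [inv_a, mul_assoc, ← zpow_neg_one]
  exact (h.a_mul _).δ_zpow_mul _

end HasPowerTailForm

/-- Every element `β` of `B₃` can be written as `β = δ^q · T` where `q ∈ ℤ` and `T` is
either the empty word (`s = []`) or a positive word in increasing form
`a_τ^{s₁} a_{τ+1}^{s₂} ⋯ a_{τ+t−1}^{s_t}` with all exponents `sᵢ ≥ 1`. -/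
theorem exists_power_tail_form (β : BandB3) :
    ∃ (q : ℤ) (τ : ZMod 3) (s : List ℕ),
      (∀ x ∈ s, 1 ≤ x) ∧ β = δ ^ q * tailProd τ s := by
  have hβ : β ∈ Subgroup.closure (Set.range a) := by
    rw [show a = PresentedGroup.of from rfl, PresentedGroup.closure_range_of]
    exact Subgroup.mem_top β
  induction hβ using Subgroup.closure_induction_left with
  | one => exact HasPowerTailForm.one
  | mul_left _ hx _ _ ih =>
    obtain ⟨i, rfl⟩ := hx
    exact HasPowerTailForm.a_mul i ih
  | inv_mul_cancel _ hx _ _ ih =>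
    obtain ⟨i, rfl⟩ := hx
    exact HasPowerTailForm.inv_a_mul i ih
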